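/- With A, D, U, L as in the block factorization and B_U := (U·D)⁻¹, the left-preconditioned matrix B_U·A equals the block lower unitriangular matrix L = [[I, 0],[A₂₂⁻¹A₂₁, I]], and hence all its eigenvalues equal 1. -/
import Mathlib


open Matrix Polynomial

lemma charpoly_one_aux (k : ℕ) :
    (1 : Matrix (Fin k) (Fin k) ℝ).charpoly = (X - 1) ^ k := by
  have h : charmatrix (1 : Matrix (Fin k) (Fin k) ℝ) =
      diagonal (fun _ => (X : ℝ[X]) - 1) := by
    ext i j
    by_cases hij : i = j <;>
      simp [charmatrix_apply, Matrix.one_apply, diagonal_apply, hij]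
  rw [Matrix.charpoly, h, det_diagonal]
  simp

theorem left_preconditioned_eq_L {n m : ℕ}
    (A₁₁ : Matrix (Fin n) (Fin n) ℝ) (A₁₂ : Matrix (Fin n) (Fin m) ℝ)
    (A₂₁ : Matrix (Fin m) (Fin n) ℝ) (A₂₂ : Matrix (Fin m) (Fin m) ℝ)
    (hA₂₂ : IsUnit A₂₂)
    (hS : IsUnit (A₁₁ - A₁₂ * A₂₂⁻¹ * A₂₁)) :
    (Matrix.fromBlocks 1 (A₁₂ * A₂₂⁻¹) 0 1 *
        Matrix.fromBlocks (A₁₁ - A₁₂ * A₂₂⁻¹ * A₂₁) 0 0 A₂₂)⁻¹ *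
      Matrix.fromBlocks A₁₁ A₁₂ A₂₁ A₂₂ =
      Matrix.fromBlocks 1 0 (A₂₂⁻¹ * A₂₁) 1 ∧
    ((Matrix.fromBlocks 1 (A₁₂ * A₂₂⁻¹) 0 1 *
        Matrix.fromBlocks (A₁₁ - A₁₂ * A₂₂⁻¹ * A₂₁) 0 0 A₂₂)⁻¹ *
      Matrix.fromBlocks A₁₁ A₁₂ A₂₁ A₂₂).charpoly =
      (Polynomial.X - 1) ^ (n + m) := by
  set S := A₁₁ - A₁₂ * A₂₂⁻¹ * A₂₁ with hSdef
  have hA₂₂d : IsUnit A₂₂.det := (isUnit_iff_isUnit_det _).mp hA₂₂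
  have hSd : IsUnit S.det := (isUnit_iff_isUnit_det _).mp hS
  have hUDform : Matrix.fromBlocks 1 (A₁₂ * A₂₂⁻¹) 0 1 *
      Matrix.fromBlocks S 0 0 A₂₂ = Matrix.fromBlocks S A₁₂ 0 A₂₂ := by
    rw [fromBlocks_multiply]
    congr 1 <;> simp [Matrix.mul_assoc, Matrix.nonsing_inv_mul A₂₂ hA₂₂d]
  have hUDdet : IsUnit (Matrix.fromBlocks 1 (A₁₂ * A₂₂⁻¹) 0 1 *
      Matrix.fromBlocks S 0 0 A₂₂).det := by
    rw [hUDform, det_fromBlocks_zero₂₁]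
    exact hSd.mul hA₂₂d
  have key : (Matrix.fromBlocks 1 (A₁₂ * A₂₂⁻¹) 0 1 *
      Matrix.fromBlocks S 0 0 A₂₂) * Matrix.fromBlocks 1 0 (A₂₂⁻¹ * A₂₁) 1 =
      Matrix.fromBlocks A₁₁ A₁₂ A₂₁ A₂₂ := by
    have hbl : A₂₂ * (A₂₂⁻¹ * A₂₁) = A₂₁ := by
      rw [← Matrix.mul_assoc, Matrix.mul_nonsing_inv A₂₂ hA₂₂d, Matrix.one_mul]
    rw [hUDform, fromBlocks_multiply]
    simp [hbl, hSdef, Matrix.mul_assoc]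
  have h1 : (Matrix.fromBlocks 1 (A₁₂ * A₂₂⁻¹) 0 1 *
      Matrix.fromBlocks S 0 0 A₂₂)⁻¹ * Matrix.fromBlocks A₁₁ A₁₂ A₂₁ A₂₂ =
      Matrix.fromBlocks 1 0 (A₂₂⁻¹ * A₂₁) 1 := by
    rw [← key, ← Matrix.mul_assoc, Matrix.nonsing_inv_mul _ hUDdet, Matrix.one_mul]
  refine ⟨h1, ?_⟩
  rw [h1, charpoly_fromBlocks_zero₁₂, charpoly_one_aux, charpoly_one_aux, ← pow_add]
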